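/- For every b ∈ ℂ, the function z ↦ exp(i(φ(z+b) − φ(z)))·exp(−2i((B−ν)·Im⟨z,b⟩ + μ·Im⟨τ(z), ρ([1,b])⁻¹·0⟩)) is constant on ℂ. -/

import Mathlib

noncomputable section

open Complex

/-- The group `G = 𝕋 ⋉ ℂ`, with elements `[a,b]`, acting on `ℂ` by `z ↦ a z + b`. -/
@[ext]
structure GT : Type where
  a : Circle
  b : ℂ

namespace GT

instance : Group GT where
  mul g h := ⟨g.a * h.a, (g.a : ℂ) * h.b + g.b⟩
  one := ⟨1, 0⟩
  inv g := ⟨g.a⁻¹, -((g.a⁻¹ : ℂ) * g.b)⟩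
  mul_assoc g h k := by
    refine GT.ext (mul_assoc _ _ _) ?_
    show ((g.a * h.a : Circle) : ℂ) * k.b + ((g.a : ℂ) * h.b + g.b)
        = (g.a : ℂ) * ((h.a : ℂ) * k.b + h.b) + g.b
    push_cast; ring
  one_mul g := by
    refine GT.ext (one_mul _) ?_
    show ((1 : Circle) : ℂ) * g.b + 0 = g.b
    simp
  mul_one g := by
    refine GT.ext (mul_one _) ?_
    show (g.a : ℂ) * 0 + g.b = g.b
    simp
  inv_mul_cancel g := by
    refine GT.ext (inv_mul_cancel _) ?_
    show ((g.a⁻¹ : Circle) : ℂ) * g.b + -(((g.a : ℂ))⁻¹ * g.b) = 0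
    push_cast; ring

/-- The action of `G` on `ℂ` : `[a,b]·z = a z + b`. -/
def act (g : GT) (z : ℂ) : ℂ := (g.a : ℂ) * z + g.b

end GT

/-- The Hermitian product `⟨z,w⟩ = z·conj w`. -/
def herm (z w : ℂ) : ℂ := z * (starRingEnd ℂ) w

/-- The automorphic factor `j^α(g,z) = exp(2 i α Im⟨z, g⁻¹·0⟩)`. -/
def jfac (α : ℝ) (g : GT) (z : ℂ) : ℂ :=
  Complex.exp (2 * Complex.I * (α : ℂ) * ((herm z (GT.act g⁻¹ 0)).im : ℂ))

/-- The Wirtinger derivative `∂f/∂z = (1/2)(∂f/∂x − i ∂f/∂y)`. -/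
def wderiv (f : ℂ → ℂ) (z : ℂ) : ℂ :=
  (1 / 2 : ℂ) * (fderiv ℝ f z 1 - Complex.I * fderiv ℝ f z Complex.I)

/-- The anti-Wirtinger derivative `∂f/∂z̄ = (1/2)(∂f/∂x + i ∂f/∂y)`. -/
def wderivBar (f : ℂ → ℂ) (z : ℂ) : ℂ :=
  (1 / 2 : ℂ) * (fderiv ℝ f z 1 + Complex.I * fderiv ℝ f z Complex.I)

/-- The Euclidean Laplacian `Δ = 4 ∂²/∂z∂z̄`. -/
def lap (f : ℂ → ℂ) (z : ℂ) : ℂ := 4 * wderiv (fun w => wderivBar f w) z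

/-- `S(z) = ν z + μ (τ(z)·∂τ̄/∂z̄(z) − τ̄(z)·∂τ/∂z̄(z))`. -/
def Sfun (ν μ : ℝ) (τ : ℂ → ℂ) (z : ℂ) : ℂ :=
  (ν : ℂ) * z + (μ : ℂ) *
    (τ z * wderivBar (fun w => (starRingEnd ℂ) (τ w)) z - (starRingEnd ℂ) (τ z) * wderivBar τ z)

/-- `B(z) = ν + μ(|∂τ/∂z(z)|² − |∂τ/∂z̄(z)|²)`. -/
def Bfun (ν μ : ℝ) (τ : ℂ → ℂ) (z : ℂ) : ℝ :=
  ν + μ * (‖wderiv τ z‖ ^ 2 - ‖wderivBar τ z‖ ^ 2)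

/-- The magnetic Schrödinger operator `L`. -/
def Lop (ν μ : ℝ) (τ : ℂ → ℂ) (f : ℂ → ℂ) (z : ℂ) : ℂ :=
  - wderiv (fun w => wderivBar f w) z
    - (Sfun ν μ τ z * wderiv f z - (starRingEnd ℂ) (Sfun ν μ τ z) * wderivBar f z)
    + ((‖Sfun ν μ τ z‖ : ℂ)) ^ 2 * f z
    - ((μ : ℂ) / 4) *
        (τ z * lap (fun w => (starRingEnd ℂ) (τ w)) z - (starRingEnd ℂ) (τ z) * lap τ z) * f z

/-- The annihilation operator `A f = ∂f/∂z̄ + S f`. -/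
def Aop (ν μ : ℝ) (τ : ℂ → ℂ) (f : ℂ → ℂ) (z : ℂ) : ℂ :=
  wderivBar f z + Sfun ν μ τ z * f z

/-- The creation operator `Ã f = −∂f/∂z + conj(S) f`. -/
def Atop (ν μ : ℝ) (τ : ℂ → ℂ) (f : ℂ → ℂ) (z : ℂ) : ℂ :=
  - wderiv f z + (starRingEnd ℂ) (Sfun ν μ τ z) * f z

/-- `J(g,z) = j^ν(g,z)·j^μ(ρ(g),τ(z))`. -/
def Jfun (ν μ : ℝ) (ρ : GT → GT) (τ : ℂ → ℂ) (g : GT) (z : ℂ) : ℂ :=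
  jfac ν g z * jfac μ (ρ g) (τ z)

/-- `φ_ρ(g,g') = Im(ν⟨g⁻¹·0,g'·0⟩ + μ⟨ρ(g⁻¹)·0, ρ(g')·0⟩)`. -/
def phiRho (ν μ : ℝ) (ρ : GT → GT) (g g' : GT) : ℝ :=
  ((ν : ℂ) * herm (GT.act g⁻¹ 0) (GT.act g' 0)
    + (μ : ℂ) * herm (GT.act (ρ g⁻¹) 0) (GT.act (ρ g') 0)).im

/-- Membership in the lattice `Γ = ℤω₁ + ℤω₂`. -/
def inLattice (ω₁ ω₂ : ℂ) (γ : ℂ) : Prop := ∃ m n : ℤ, γ = (m : ℂ) * ω₁ + (n : ℂ) * ω₂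

/-- Mixed `Γ`-automorphic form of type `(ν,μ)` w.r.t. the pair `(ρ,τ)`. -/
def MixedForm (ν μ : ℝ) (ρ : GT → GT) (τ : ℂ → ℂ) (ω₁ ω₂ : ℂ) (F : ℂ → ℂ) : Prop :=
  ContDiff ℝ (⊤ : ℕ∞) F ∧ ∀ γ : ℂ, inLattice ω₁ ω₂ γ → ∀ z : ℂ,
    F (z + γ) = jfac (-ν) ⟨(1 : Circle), γ⟩ z * jfac (-μ) (ρ ⟨(1 : Circle), γ⟩) (τ z) * F z

/-- The Laguerre polynomial `L_k`. -/
def laguerre (k : ℕ) (x : ℝ) : ℝ :=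
  ∑ j ∈ Finset.range (k + 1), (-1) ^ j * (k.choose j : ℝ) * x ^ j / (Nat.factorial j : ℝ)


/-- The multiplier `χ_τ(γ) = exp(iφ(γ) − 2iμ Im⟨τ(0), ρ([1,γ])⁻¹·0⟩)`. -/
def chiTau (μ : ℝ) (ρ : GT → GT) (τ : ℂ → ℂ) (φ : ℂ → ℝ) (γ : ℂ) : ℂ :=
  Complex.exp (Complex.I * (φ γ : ℂ)
    - 2 * Complex.I * (μ : ℂ) * ((herm (τ 0) (GT.act (ρ ⟨1, γ⟩)⁻¹ 0)).im : ℂ))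

/-- The eigenprojector kernel `K_k`. -/
def Kker (B : ℝ) (φ : ℂ → ℝ) (k : ℕ) (z w : ℂ) : ℂ :=
  ((2 * B / Real.pi : ℝ) : ℂ) * Complex.exp (-Complex.I * ((φ z - φ w : ℝ) : ℂ)) *
    Complex.exp (2 * Complex.I * (B : ℂ) * ((herm z w).im : ℂ)) *
    Complex.exp (-((B * ‖z - w‖ ^ 2 : ℝ) : ℂ)) *
    ((laguerre k (2 * B * ‖z - w‖ ^ 2) : ℝ) : ℂ)

/-- The kernel `K^σ_ξ;k`. -/
def Kxi (σ : ℝ) (ξ : ℂ) (k : ℕ) (z w : ℂ) : ℂ :=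
  ((2 * σ / Real.pi : ℝ) : ℂ) * Complex.exp (2 * Complex.I * ((herm (z - w) ξ).im : ℂ)) *
    Complex.exp (2 * Complex.I * (σ : ℂ) * ((herm z w).im : ℂ)) *
    Complex.exp (-((σ * ‖z - w‖ ^ 2 : ℝ) : ℂ)) *
    ((laguerre k (2 * σ * ‖z - w‖ ^ 2) : ℝ) : ℂ)

/-- `m`-fold iterate of the creation operator `Ã`. -/
def AtopIter (ν μ : ℝ) (τ : ℂ → ℂ) (m : ℕ) (f : ℂ → ℂ) : ℂ → ℂ :=
  (fun u z => Atop ν μ τ u z)^[m] f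

/-!
The exponent is `i R` for the real function
`R u = φ (u + b) - φ u - 2 ((B - ν) Im⟨u, b⟩ + μ Im⟨τ u, c⟩)`, `c = ρ([1,b])⁻¹·0 = -χ̄ψ`.
Translating `∂̄φ = -i (S - B z)` by `b` and using `τ (u + b) = χ τ u + ψ` with `|χ| = 1`, the
increment `S (u + b) - S u - ν b` cancels exactly against `∂̄` of the two imaginary parts, so
`∂̄R = 0`. Since `R` is real, `∂R = conj (∂̄R) = 0` as well, hence `R` is constant.
-/

open ComplexConjugate

theorem GT.act_mk_one (b z : ℂ) : GT.act ⟨1, b⟩ z = z + b := by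
  simp [GT.act, add_comm]

theorem GT.act_inv_zero (g : GT) : GT.act g⁻¹ 0 = -(conj (g.a : ℂ) * g.b) := by
  show ((g.a⁻¹ : Circle) : ℂ) * 0 + -(((g.a⁻¹ : Circle) : ℂ) * g.b) = _
  rw [Circle.coe_inv_eq_conj]
  ring

theorem ofReal_im_herm (z c : ℂ) :
    ((herm z c).im : ℂ) = -(I / 2) * (z * conj c - conj z * c) := by
  apply Complex.ext <;> simp [herm]; ring

section Wirtinger

variable {f g : ℂ → ℂ} {z : ℂ}

theorem wderivBar_sub (hf : DifferentiableAt ℝ f z) (hg : DifferentiableAt ℝ g z) :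
    wderivBar (fun w => f w - g w) z = wderivBar f z - wderivBar g z := by
  simp only [wderivBar, fderiv_fun_sub hf hg, FunLike.coe_sub, Pi.sub_apply]
  ring

theorem wderivBar_const_mul (a : ℂ) (f : ℂ → ℂ) (z : ℂ) :
    wderivBar (fun w => a * f w) z = a * wderivBar f z := by
  have h : (fun w => a * f w) = a • f := rfl
  simp only [wderivBar, h, fderiv_const_smul_field, Pi.smul_apply, FunLike.coe_smul, smul_eq_mul]
  ring

theorem wderivBar_add_const (c : ℂ) (f : ℂ → ℂ) (z : ℂ) :
    wderivBar (fun w => f w + c) z = wderivBar f z := by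
  simp only [wderivBar, fderiv_add_const]

theorem wderivBar_comp_add_right (b : ℂ) (f : ℂ → ℂ) (z : ℂ) :
    wderivBar (fun w => f (w + b)) z = wderivBar f (z + b) := by
  simp only [wderivBar, fderiv_comp_add_right]

theorem wderivBar_id (z : ℂ) : wderivBar (fun w => w) z = 0 := by
  simp [wderivBar]

theorem wderivBar_conj (z : ℂ) : wderivBar (fun w => conj w) z = 1 := by
  have h : (fun w => conj w) = (conjCLE.toContinuousLinearMap : ℂ →L[ℝ] ℂ) := rfl
  rw [wderivBar, h, ContinuousLinearMap.fderiv]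
  norm_num

theorem wderivBar_mul_const (a : ℂ) (f : ℂ → ℂ) (z : ℂ) :
    wderivBar (fun w => f w * a) z = wderivBar f z * a := by
  simp_rw [mul_comm _ a]
  exact wderivBar_const_mul a f z

theorem wderivBar_ofReal_im_herm (hf : DifferentiableAt ℝ f z) (c : ℂ) :
    wderivBar (fun w => ((herm (f w) c).im : ℂ)) z =
      -(I / 2) * (wderivBar f z * conj c - wderivBar (fun w => conj (f w)) z * c) := by
  simp_rw [ofReal_im_herm]
  rw [wderivBar_const_mul, wderivBar_sub (by fun_prop) (by fun_prop), wderivBar_mul_const,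
    wderivBar_mul_const]

theorem wderivBar_add_of_forall_add_eq {b a c : ℂ} (h : ∀ w, f (w + b) = a * f w + c) (z : ℂ) :
    wderivBar f (z + b) = a * wderivBar f z := by
  rw [← wderivBar_comp_add_right, funext h, wderivBar_add_const, wderivBar_const_mul]

theorem eq_of_wderivBar_ofReal_eq_zero {R : ℂ → ℝ} (hR : Differentiable ℝ R)
    (h : ∀ z, wderivBar (fun w => (R w : ℂ)) z = 0) (x y : ℂ) : R x = R y := by
  refine is_const_of_fderiv_eq_zero hR (fun z => ?_) x y
  have hderiv : fderiv ℝ (fun w => (R w : ℂ)) z = ofRealCLM.comp (fderiv ℝ R z) :=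
    (ofRealCLM.hasFDerivAt.comp z (hR z).hasFDerivAt).fderiv
  have hz := h z
  rw [wderivBar, hderiv] at hz
  simp only [one_div, ContinuousLinearMap.comp_apply, ofRealCLM_apply, mul_eq_zero, inv_eq_zero,
    OfNat.ofNat_ne_zero, false_or] at hz
  have h1 : fderiv ℝ R z 1 = 0 := by simpa using congrArg re hz
  have hI : fderiv ℝ R z I = 0 := by simpa using congrArg im hz
  ext u
  have hu : u = u.re • (1 : ℂ) + u.im • I := by simp [real_smul]
  rw [hu, map_add, map_smul, map_smul, h1, hI]
  simp

end Wirtinger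

theorem Sfun_add_of_forall_add_eq (ν μ : ℝ) {τ : ℂ → ℂ} {b χ ψ : ℂ} (hχ : conj χ * χ = 1)
    (h : ∀ w, τ (w + b) = χ * τ w + ψ) (z : ℂ) :
    Sfun ν μ τ (z + b) = Sfun ν μ τ z + ν * b +
      μ * (ψ * conj χ * wderivBar (fun w => conj (τ w)) z - conj ψ * χ * wderivBar τ z) := by
  have hconj : ∀ w, conj (τ (w + b)) = conj χ * conj (τ w) + conj ψ := fun w => by simp [h]
  rw [Sfun, Sfun, h z, wderivBar_add_of_forall_add_eq h,
    wderivBar_add_of_forall_add_eq (f := fun w => conj (τ w)) hconj]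
  simp only [map_add, map_mul]
  linear_combination
    (μ : ℂ) * (τ z * wderivBar (fun w => conj (τ w)) z - conj (τ z) * wderivBar τ z) * hχ

theorem wderivBar_translationPhase_eq_zero {ν μ B : ℝ} {τ : ℂ → ℂ} {φ : ℂ → ℝ} {b χ ψ : ℂ}
    (hτd : Differentiable ℝ τ) (hφd : Differentiable ℝ φ)
    (hφ : ∀ z, wderivBar (fun w => (φ w : ℂ)) z = -I * (Sfun ν μ τ z - B * z))
    (hχ : conj χ * χ = 1) (htrans : ∀ w, τ (w + b) = χ * τ w + ψ) (z : ℂ) :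
    wderivBar (fun u => ((φ (u + b) - φ u
      - 2 * ((B - ν) * (herm u b).im + μ * (herm (τ u) (-(conj χ * ψ))).im) : ℝ) : ℂ)) z = 0 := by
  set c := -(conj χ * ψ) with hc
  have hsplit : (fun u => ((φ (u + b) - φ u
      - 2 * ((B - ν) * (herm u b).im + μ * (herm (τ u) c).im) : ℝ) : ℂ)) = fun u =>
      (φ (u + b) : ℂ) - φ u - ((2 * (B - ν) : ℝ) : ℂ) * (herm u b).im
        - ((2 * μ : ℝ) : ℂ) * (herm (τ u) c).im := by
    funext u; push_cast; ring
  rw [hsplit, wderivBar_sub, wderivBar_sub, wderivBar_sub, wderivBar_const_mul,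
    wderivBar_const_mul, wderivBar_comp_add_right b (fun w => (φ w : ℂ)), hφ, hφ,
    wderivBar_ofReal_im_herm, wderivBar_ofReal_im_herm, wderivBar_id, wderivBar_conj,
    Sfun_add_of_forall_add_eq ν μ hχ htrans]
  · simp only [hc, map_neg, map_mul, conj_conj]
    push_cast
    ring
  all_goals (try unfold herm); fun_prop

theorem statement8_general (ν μ : ℝ)
    (ρ : GT →* GT) (τ : ℂ → ℂ) (hτ : ContDiff ℝ (⊤ : ℕ∞) τ)
    (hequiv : ∀ (g : GT) (z : ℂ), τ (GT.act g z) = GT.act (ρ g) (τ z))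
    (B : ℝ)
    (φ : ℂ → ℝ) (hφs : ContDiff ℝ (⊤ : ℕ∞) φ)
    (hφ : ∀ z : ℂ, wderivBar (fun w => (φ w : ℂ)) z = -Complex.I * (Sfun ν μ τ z - (B : ℂ) * z))
    (b : ℂ) :
    ∀ z w : ℂ,
      Complex.exp (Complex.I * ((φ (z + b) - φ z : ℝ) : ℂ)) *
        Complex.exp (-2 * Complex.I *
          (((B - ν) * (herm z b).im + μ * (herm (τ z) (GT.act (ρ ⟨1, b⟩)⁻¹ 0)).im : ℝ) : ℂ)) =
      Complex.exp (Complex.I * ((φ (w + b) - φ w : ℝ) : ℂ)) *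
        Complex.exp (-2 * Complex.I *
          (((B - ν) * (herm w b).im + μ * (herm (τ w) (GT.act (ρ ⟨1, b⟩)⁻¹ 0)).im : ℝ) : ℂ)) := by
  set χ : ℂ := ((ρ ⟨1, b⟩).a : ℂ)
  set ψ : ℂ := (ρ ⟨1, b⟩).b
  have hχ : conj χ * χ = 1 := by simp [χ, conj_mul', Circle.norm_coe]
  have htrans (w : ℂ) : τ (w + b) = χ * τ w + ψ := by
    rw [← GT.act_mk_one, hequiv]
    rfl
  have hτd : Differentiable ℝ τ := hτ.differentiable (by simp)
  have hφd : Differentiable ℝ φ := hφs.differentiable (by simp)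
  have hphase := eq_of_wderivBar_ofReal_eq_zero (by unfold herm; fun_prop)
    (wderivBar_translationPhase_eq_zero hτd hφd hφ hχ htrans)
  intro z w
  rw [GT.act_inv_zero, ← exp_add, ← exp_add]
  congr 1
  have := congrArg (fun r : ℝ => I * (r : ℂ)) (hphase z w)
  push_cast at this ⊢
  linear_combination this

theorem statement8 (ν μ : ℝ) (hν : 0 < ν) (hμ : 0 < μ)
    (ρ : GT →* GT) (τ : ℂ → ℂ) (hτ : ContDiff ℝ (⊤ : ℕ∞) τ)
    (hequiv : ∀ (g : GT) (z : ℂ), τ (GT.act g z) = GT.act (ρ g) (τ z))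
    (B : ℝ) (hB : ∀ z : ℂ, Bfun ν μ τ z = B)
    (φ : ℂ → ℝ) (hφs : ContDiff ℝ (⊤ : ℕ∞) φ) (hφ0 : φ 0 = 0)
    (hφ : ∀ z : ℂ, wderivBar (fun w => (φ w : ℂ)) z = -Complex.I * (Sfun ν μ τ z - (B : ℂ) * z))
    (b : ℂ) :
    ∀ z w : ℂ,
      Complex.exp (Complex.I * ((φ (z + b) - φ z : ℝ) : ℂ)) *
        Complex.exp (-2 * Complex.I *
          (((B - ν) * (herm z b).im + μ * (herm (τ z) (GT.act (ρ ⟨1, b⟩)⁻¹ 0)).im : ℝ) : ℂ)) =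
      Complex.exp (Complex.I * ((φ (w + b) - φ w : ℝ) : ℂ)) *
        Complex.exp (-2 * Complex.I *
          (((B - ν) * (herm w b).im + μ * (herm (τ w) (GT.act (ρ ⟨1, b⟩)⁻¹ 0)).im : ℝ) : ℂ)) :=
  statement8_general ν μ ρ τ hτ hequiv B φ hφs hφ b
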